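/- arXiv:1308.5180 — 2 statements merged into one kernel-verified Lean document; each statement's English description precedes it below -/
import Mathlib

section
/- Assume (G) and (L). Then for every r > 0 with M(r,L) > R0 and every integer n ≥ 1, the quantities M(2^i r, L) exceed R0 for 0 ≤ i ≤ n, and ∏_{i=0}^{n-1} ( a + (log C1)/(log M(2^i r, L)) ) ≤ (log M(2^n r, L))/(log M(r,L)) ≤ ∏_{i=0}^{n-1} ( b + (log C2)/(log M(2^i r, L)) ). -/
/-- The maximum modulus `M(r,g) = max_{‖x‖ = r} ‖g(x)‖` (as a supremum). -/
noncomputable def maxMod {m : ℕ} (g : EuclideanSpace ℝ (Fin m) → EuclideanSpace ℝ (Fin m))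
    (r : ℝ) : ℝ :=
  sSup ((fun x => ‖g x‖) '' {x : EuclideanSpace ℝ (Fin m) | ‖x‖ = r})

/-- Basic properties of `maxMod`: attained and an upper bound. -/
lemma maxMod_spec {m : ℕ} (hm : 1 ≤ m)
    (L : EuclideanSpace ℝ (Fin m) → EuclideanSpace ℝ (Fin m)) (hL : Continuous L)
    {r : ℝ} (hr : 0 ≤ r) :
    (∃ x : EuclideanSpace ℝ (Fin m), ‖x‖ = r ∧ ‖L x‖ = maxMod L r) ∧
    (∀ x : EuclideanSpace ℝ (Fin m), ‖x‖ = r → ‖L x‖ ≤ maxMod L r) := by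
  have hsphere : {x : EuclideanSpace ℝ (Fin m) | ‖x‖ = r} = Metric.sphere 0 r := by
    ext x; simp [mem_sphere_zero_iff_norm]
  have hcompact : IsCompact {x : EuclideanSpace ℝ (Fin m) | ‖x‖ = r} := by
    rw [hsphere]; exact isCompact_sphere 0 r
  have hne : ({x : EuclideanSpace ℝ (Fin m) | ‖x‖ = r}).Nonempty := by
    refine ⟨EuclideanSpace.single (⟨0, by omega⟩ : Fin m) r, ?_⟩
    simp [EuclideanSpace.norm_single, abs_of_nonneg hr]
  set S := (fun x => ‖L x‖) '' {x : EuclideanSpace ℝ (Fin m) | ‖x‖ = r} with hS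
  have hScompact : IsCompact S := hcompact.image (hL.norm)
  have hSne : S.Nonempty := hne.image _
  have hmem : sSup S ∈ S := hScompact.sSup_mem hSne
  constructor
  · obtain ⟨x, hx, hxs⟩ := hmem
    exact ⟨x, hx, hxs⟩
  · intro x hx
    exact le_csSup hScompact.bddAbove ⟨x, hx, rfl⟩

/-- One doubling step: `M(r) < C1 M(r)^a ≤ M(2r) ≤ C2 M(r)^b`. -/
lemma maxMod_step {m : ℕ} (hm : 1 ≤ m) {a b R0 C1 C2 : ℝ}
    (hR0 : 1 ≤ R0) (hC1 : 0 < C1) (hC2 : 1 ≤ C2) (ha1 : 1 < a) (hb0 : 0 ≤ b)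
    (hbig : 1 < C1 * R0 ^ (a - 1))
    {f L : EuclideanSpace ℝ (Fin m) → EuclideanSpace ℝ (Fin m)}
    (hlow : ∀ y : EuclideanSpace ℝ (Fin m), R0 < ‖y‖ → C1 * ‖y‖ ^ a ≤ ‖f y‖)
    (hup : ∀ y : EuclideanSpace ℝ (Fin m), ‖f y‖ ≤ C2 * (max ‖y‖ R0) ^ b)
    (hLcont : Continuous L)
    (hfunc : ∀ x : EuclideanSpace ℝ (Fin m), f (L x) = L ((2 : ℝ) • x))
    {r : ℝ} (hr : 0 < r) (hMr : R0 < maxMod L r) :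
    maxMod L r < C1 * (maxMod L r) ^ a ∧
    C1 * (maxMod L r) ^ a ≤ maxMod L (2 * r) ∧
    maxMod L (2 * r) ≤ C2 * (maxMod L r) ^ b := by
  obtain ⟨⟨x0, hx0r, hx0M⟩, hub⟩ := maxMod_spec hm L hLcont hr.le
  obtain ⟨⟨y0, hy0r, hy0M⟩, hub2⟩ := maxMod_spec hm L hLcont (by linarith : (0:ℝ) ≤ 2 * r)
  set M := maxMod L r with hMdef
  have hMpos : 0 < M := lt_of_lt_of_le (by linarith) hMr.le
  -- strict growth of C1 * M ^ a over M
  have hstrict : M < C1 * M ^ a := by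
    have h1 : R0 ^ (a - 1) < M ^ (a - 1) :=
      Real.rpow_lt_rpow (by linarith) hMr (by linarith)
    have h2 : 1 < C1 * M ^ (a - 1) := by nlinarith [Real.rpow_nonneg (by linarith : (0:ℝ) ≤ R0) (a-1)]
    have h3 : M ^ a = M ^ (a - 1) * M := by
      nth_rewrite 1 [show a = (a-1) + 1 by ring]
      rw [Real.rpow_add hMpos, Real.rpow_one]
    nlinarith
  refine ⟨hstrict, ?_, ?_⟩
  · -- lower bound
    have hLx0 : R0 < ‖L x0‖ := by rw [hx0M]; exact hMr
    have h1 := hlow (L x0) hLx0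
    rw [hfunc x0, hx0M] at h1
    have h2 : ‖(2:ℝ) • x0‖ = 2 * r := by
      rw [norm_smul, hx0r, Real.norm_eq_abs, abs_of_pos (by norm_num : (0:ℝ) < 2)]
    calc C1 * M ^ a ≤ ‖L ((2:ℝ) • x0)‖ := h1
      _ ≤ maxMod L (2 * r) := hub2 _ h2
  · -- upper bound
    show sSup _ ≤ C2 * M ^ b
    refine csSup_le ⟨‖L y0‖, ⟨y0, hy0r, rfl⟩⟩ ?_
    rintro z ⟨y, hy, rfl⟩
    simp only [Set.mem_setOf_eq] at hy
    have hx : ‖(2:ℝ)⁻¹ • y‖ = r := by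
      rw [norm_smul, hy, Real.norm_eq_abs, abs_of_pos (by norm_num : (0:ℝ) < (2:ℝ)⁻¹)]; ring
    have hLy : L y = f (L ((2:ℝ)⁻¹ • y)) := by
      rw [hfunc, smul_smul]; norm_num
    have h1 := hup (L ((2:ℝ)⁻¹ • y))
    have h2 : max ‖L ((2:ℝ)⁻¹ • y)‖ R0 ≤ M :=
      max_le (hub _ hx) hMr.le
    have h3 : (max ‖L ((2:ℝ)⁻¹ • y)‖ R0) ^ b ≤ M ^ b :=
      Real.rpow_le_rpow (le_max_of_le_right (by linarith)) h2 hb0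
    calc ‖L y‖ = ‖f (L ((2:ℝ)⁻¹ • y))‖ := by rw [hLy]
      _ ≤ C2 * (max ‖L ((2:ℝ)⁻¹ • y)‖ R0) ^ b := h1
      _ ≤ C2 * M ^ b := by nlinarith

/-- Lemma 7.1 of the paper: two-sided product bounds for `log M(2^n r, L) / log M(r, L)`. -/
theorem maxMod_product_bounds {m : ℕ} (hm : 2 ≤ m) (d K : ℝ) (hK : 1 ≤ K) (hdK : K < d)
    (a b : ℝ) (ha : a = (d / K) ^ ((1 : ℝ) / ((m : ℝ) - 1)))
    (hb : b = (d * K) ^ ((1 : ℝ) / ((m : ℝ) - 1)))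
    (R0 C1 C2 : ℝ) (hR0 : 1 ≤ R0) (hC1 : 0 < C1) (hC2 : 1 ≤ C2)
    (hbig : 1 < C1 * R0 ^ (a - 1))
    (f L : EuclideanSpace ℝ (Fin m) → EuclideanSpace ℝ (Fin m))
    (hlow : ∀ y : EuclideanSpace ℝ (Fin m), R0 < ‖y‖ → C1 * ‖y‖ ^ a ≤ ‖f y‖)
    (hup : ∀ y : EuclideanSpace ℝ (Fin m), ‖f y‖ ≤ C2 * (max ‖y‖ R0) ^ b)
    (hLcont : Continuous L)
    (hfunc : ∀ x : EuclideanSpace ℝ (Fin m), f (L x) = L ((2 : ℝ) • x)) :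
    ∀ r : ℝ, 0 < r → R0 < maxMod L r → ∀ n : ℕ, 1 ≤ n →
      (∀ i : ℕ, i ≤ n → R0 < maxMod L ((2 : ℝ) ^ i * r)) ∧
      (∏ i ∈ Finset.range n, (a + Real.log C1 / Real.log (maxMod L ((2 : ℝ) ^ i * r)))) ≤
        Real.log (maxMod L ((2 : ℝ) ^ n * r)) / Real.log (maxMod L r) ∧
      Real.log (maxMod L ((2 : ℝ) ^ n * r)) / Real.log (maxMod L r) ≤
        ∏ i ∈ Finset.range n, (b + Real.log C2 / Real.log (maxMod L ((2 : ℝ) ^ i * r))) := by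
  have hm1 : 1 ≤ m := by omega
  have hmR : (2 : ℝ) ≤ (m : ℝ) := by exact_mod_cast hm
  have hexp : 0 < (1 : ℝ) / ((m : ℝ) - 1) := by
    apply div_pos one_pos; linarith
  have ha1 : 1 < a := by
    rw [ha, Real.one_lt_rpow_iff_of_pos (div_pos (by linarith) (by linarith))]
    left
    exact ⟨(one_lt_div (by linarith)).mpr hdK, hexp⟩
  have hb1 : 1 < b := by
    rw [hb, Real.one_lt_rpow_iff_of_pos (mul_pos (by linarith) (by linarith))]
    left
    exact ⟨by nlinarith, hexp⟩
  intro r hr hMr n _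
  -- prove by induction for all n (including 0)
  suffices h : ∀ n : ℕ,
      (∀ i : ℕ, i ≤ n → R0 < maxMod L ((2 : ℝ) ^ i * r)) ∧
      (∏ i ∈ Finset.range n, (a + Real.log C1 / Real.log (maxMod L ((2 : ℝ) ^ i * r)))) ≤
        Real.log (maxMod L ((2 : ℝ) ^ n * r)) / Real.log (maxMod L r) ∧
      Real.log (maxMod L ((2 : ℝ) ^ n * r)) / Real.log (maxMod L r) ≤
        ∏ i ∈ Finset.range n, (b + Real.log C2 / Real.log (maxMod L ((2 : ℝ) ^ i * r))) by
    exact h n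
  have hL0pos : 0 < Real.log (maxMod L r) :=
    Real.log_pos (by linarith)
  intro n
  induction n with
  | zero =>
    refine ⟨?_, ?_, ?_⟩
    · intro i hi
      interval_cases i
      simpa using hMr
    · simp [ne_of_gt hL0pos]
    · simp [ne_of_gt hL0pos]
  | succ n ih =>
    obtain ⟨hall, hP, hQ⟩ := ih
    have hrn : 0 < (2 : ℝ) ^ n * r := by positivity
    have hMn : R0 < maxMod L ((2 : ℝ) ^ n * r) := hall n le_rfl
    obtain ⟨hs1, hs2, hs3⟩ := maxMod_step hm1 hR0 hC1 hC2 ha1 (by linarith) hbig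
      hlow hup hLcont hfunc hrn hMn
    set Mn := maxMod L ((2 : ℝ) ^ n * r) with hMndef
    have h2r : (2 : ℝ) ^ (n + 1) * r = 2 * ((2 : ℝ) ^ n * r) := by ring
    have hMnpos : 0 < Mn := by linarith
    have hMn1 : R0 < maxMod L ((2 : ℝ) ^ (n + 1) * r) := by
      rw [h2r]; linarith
    set Mn1 := maxMod L ((2 : ℝ) ^ (n + 1) * r) with hMn1def
    have hMn1eq : Mn1 = maxMod L (2 * ((2 : ℝ) ^ n * r)) := by rw [hMn1def, h2r]
    rw [← hMn1eq] at hs2 hs3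
    set Ln := Real.log Mn with hLndef
    set Ln1 := Real.log Mn1 with hLn1def
    set L0 := Real.log (maxMod L r) with hL0def
    have hLnpos : 0 < Ln := Real.log_pos (by linarith)
    have hMn1pos : 0 < Mn1 := by linarith
    have hLn1pos : 0 < Ln1 := Real.log_pos (by linarith)
    -- log inequalities
    have hlogC1Mna : Real.log (C1 * Mn ^ a) = Real.log C1 + a * Ln := by
      rw [Real.log_mul (ne_of_gt hC1) (ne_of_gt (by positivity)), Real.log_rpow hMnpos]
    have hlogC2Mnb : Real.log (C2 * Mn ^ b) = Real.log C2 + b * Ln := by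
      rw [Real.log_mul (by linarith) (ne_of_gt (by positivity)), Real.log_rpow hMnpos]
    have hlow' : Real.log C1 + a * Ln ≤ Ln1 := by
      rw [← hlogC1Mna]; exact Real.log_le_log (by positivity) hs2
    have hup' : Ln1 ≤ Real.log C2 + b * Ln := by
      rw [← hlogC2Mnb]; exact Real.log_le_log hMn1pos hs3
    have hstrict' : Ln < Real.log C1 + a * Ln := by
      rw [← hlogC1Mna]; exact Real.log_lt_log hMnpos hs1
    -- factors
    have hfac_low : a + Real.log C1 / Ln = (Real.log C1 + a * Ln) / Ln := by
      field_simp; ring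
    have hfac_up : b + Real.log C2 / Ln = (Real.log C2 + b * Ln) / Ln := by
      field_simp; ring
    have hfac_low_pos : 0 < a + Real.log C1 / Ln := by
      rw [hfac_low]; exact div_pos (by linarith) hLnpos
    have hfac_low_le : a + Real.log C1 / Ln ≤ Ln1 / Ln := by
      rw [hfac_low]; gcongr
    have hfac_up_ge : Ln1 / Ln ≤ b + Real.log C2 / Ln := by
      rw [hfac_up]; gcongr
    have hdivpos : 0 < Ln / L0 := div_pos hLnpos hL0pos
    have htele : (Ln / L0) * (Ln1 / Ln) = Ln1 / L0 := by
      field_simp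
    refine ⟨?_, ?_, ?_⟩
    · intro i hi
      rcases Nat.lt_or_ge i (n + 1) with h | h
      · exact hall i (by omega)
      · have : i = n + 1 := by omega
        rw [this]; exact hMn1
    · rw [Finset.prod_range_succ]
      calc (∏ i ∈ Finset.range n, (a + Real.log C1 / Real.log (maxMod L ((2:ℝ) ^ i * r)))) *
            (a + Real.log C1 / Ln)
          ≤ (Ln / L0) * (Ln1 / Ln) := by
            apply mul_le_mul hP hfac_low_le hfac_low_pos.le hdivpos.le
        _ = Ln1 / L0 := htele
    · rw [Finset.prod_range_succ]
      have hQpos : 0 ≤ ∏ i ∈ Finset.range n, (b + Real.log C2 / Real.log (maxMod L ((2:ℝ) ^ i * r))) :=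
        le_trans hdivpos.le hQ
      calc Ln1 / L0 = (Ln / L0) * (Ln1 / Ln) := htele.symm
        _ ≤ (∏ i ∈ Finset.range n, (b + Real.log C2 / Real.log (maxMod L ((2:ℝ) ^ i * r)))) *
            (b + Real.log C2 / Ln) := by
            apply mul_le_mul hQ hfac_up_ge (div_pos hLn1pos hLnpos).le hQpos
end

section
/- Assume (G), (L) and (M), suppose there exists r1 > 0 with M(r1,L) > R0, and let μ > 1. Then there exist R2 > 0 and N ∈ ℕ such that for every R > R2 and every integer n ≥ N, M( 2^n · M^n(R,L), L ) > ( 2^{n+1} · M^{n+1}(R,L) )^μ. -/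
/-- The iterated maximum modulus: `M^0(R,g) = R`, `M^{n+1}(R,g) = M(M^n(R,g), g)`. -/
noncomputable def iterMaxMod {m : ℕ} (g : EuclideanSpace ℝ (Fin m) → EuclideanSpace ℝ (Fin m))
    (R : ℝ) : ℕ → ℝ
  | 0 => R
  | n + 1 => maxMod g (iterMaxMod g R n)

open Filter Asymptotics

theorem eventually_linear_lt_const_mul_pow {a : ℝ} (ha : 1 < a) (B C : ℝ) {D : ℝ} (hD : 0 < D) :
    ∀ᶠ n : ℕ in atTop, B * n + C < D * a ^ n := by
  have hpow : Tendsto (fun n : ℕ => ‖a ^ n‖) atTop atTop := by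
    simpa [abs_of_pos (zero_lt_one.trans ha)] using tendsto_pow_atTop_atTop_of_one_lt ha
  have hlin : (fun n : ℕ => B * n + C) =o[atTop] fun n => a ^ n :=
    ((isLittleO_coe_const_pow_of_one_lt ha).const_mul_left B).add
      (isLittleO_const_left.2 (Or.inr hpow))
  filter_upwards [hlin.def (half_pos hD)] with n hn
  have han : 0 < a ^ n := pow_pos (zero_lt_one.trans ha) n
  rw [Real.norm_eq_abs, Real.norm_of_nonneg han.le] at hn
  linarith [le_abs_self (B * n + C), mul_lt_mul_of_pos_right (half_lt_self hD) han]

theorem eventually_const_mul_pow_lt_rpow_pow {γ a : ℝ} (hγ : 1 < γ) (ha : 1 < a) {c A : ℝ}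
    (hc : 0 < c) (hA : 0 < A) : ∀ᶠ n : ℕ in atTop, c * A ^ n < γ ^ (a ^ n) := by
  filter_upwards [eventually_linear_lt_const_mul_pow ha (Real.log A) (Real.log c)
    (Real.log_pos hγ)] with n hn
  rw [Real.lt_rpow_iff_log_lt (by positivity) (by linarith), Real.log_mul hc.ne' (by positivity),
    Real.log_pow]
  linarith

theorem eventually_const_mul_pow_mul_rpow_lt {γ a : ℝ} (hγ : 1 < γ) (ha : 1 < a) {c A : ℝ}
    (hc : 0 < c) (hA : 0 < A) (μ : ℝ) :
    ∀ᶠ n : ℕ in atTop, ∀ x, γ ≤ x → c * A ^ n * x ^ μ < x ^ (a ^ n) := by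
  have hγ0 : 0 < γ := zero_lt_one.trans hγ
  filter_upwards [eventually_const_mul_pow_lt_rpow_pow hγ ha (c := c * γ ^ μ) (by positivity) hA,
    (tendsto_pow_atTop_atTop_of_one_lt ha).eventually_ge_atTop μ] with n hn hμ x hx
  have hx0 : 0 < x := hγ0.trans_le hx
  have hcA : c * A ^ n < γ ^ (a ^ n - μ) := by
    rw [Real.rpow_sub hγ0, lt_div_iff₀ (by positivity)]
    linarith
  calc c * A ^ n * x ^ μ < γ ^ (a ^ n - μ) * x ^ μ := by gcongr
    _ ≤ x ^ (a ^ n - μ) * x ^ μ := by gcongr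
    _ = x ^ (a ^ n) := by rw [← Real.rpow_add hx0, sub_add_cancel]

theorem rpow_pow_le_of_rpow_le_succ {δ R₀ a : ℝ} {u : ℕ → ℝ} (hδ : 0 < δ) (ha : 1 ≤ a)
    (hδR₀ : 1 < δ * R₀) (hu0 : R₀ < u 0)
    (hstep : ∀ k, R₀ < u k → (δ * u k) ^ a ≤ δ * u (k + 1)) (k : ℕ) :
    (δ * u 0) ^ (a ^ k) ≤ δ * u k := by
  have hδu0 : δ * R₀ < δ * u 0 := by gcongr
  induction k with
  | zero => simp
  | succ k ih =>
    have huk : R₀ < u k := by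
      refine lt_of_mul_lt_mul_left ?_ hδ.le
      calc δ * R₀ < δ * u 0 := hδu0
        _ ≤ (δ * u 0) ^ (a ^ k) := Real.self_le_rpow_of_one_le (by linarith) (one_le_pow₀ ha)
        _ ≤ δ * u k := ih
    calc (δ * u 0) ^ (a ^ (k + 1)) = ((δ * u 0) ^ (a ^ k)) ^ a := by
          rw [pow_succ, Real.rpow_mul (by linarith)]
      _ ≤ (δ * u k) ^ a := by gcongr; exact Real.rpow_nonneg (by linarith) _
      _ ≤ δ * u (k + 1) := hstep k huk

theorem rpow_inv_sub_one_mul_const_mul_rpow {C a : ℝ} (hC : 0 < C) (ha : a ≠ 1) {u : ℝ}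
    (hu : 0 ≤ u) : C ^ (1 / (a - 1)) * (C * u ^ a) = (C ^ (1 / (a - 1)) * u) ^ a := by
  have ha1 : a - 1 ≠ 0 := sub_ne_zero.2 ha
  rw [Real.mul_rpow (by positivity) hu, ← Real.rpow_mul hC.le, ← mul_assoc,
    ← Real.rpow_add_one hC.ne']
  congr 2
  field_simp
  ring

theorem one_lt_rpow_inv_sub_one_mul {C a R : ℝ} (hC : 0 < C) (ha : 1 < a) (hR : 0 ≤ R)
    (h : 1 < C * R ^ (a - 1)) : 1 < C ^ (1 / (a - 1)) * R := by
  have hpow : (C ^ (1 / (a - 1)) * R) ^ (a - 1) = C * R ^ (a - 1) := by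
    rw [Real.mul_rpow (by positivity) hR, ← Real.rpow_mul hC.le,
      one_div_mul_cancel (sub_ne_zero.2 ha.ne'), Real.rpow_one]
  rw [← hpow, Real.one_lt_rpow_iff (by positivity)] at h
  rcases h with h | ⟨-, -, h⟩
  · exact h.1
  · linarith

theorem mul_rpow_pow_succ_mul {δ A t : ℝ} (hδ : 0 < δ) (hA : 0 ≤ A) (ht : 0 ≤ t) (μ : ℝ)
    (n : ℕ) : δ * (A ^ (n + 1) * t) ^ μ = δ ^ (1 - μ) * A ^ μ * (A ^ μ) ^ n * (δ * t) ^ μ := by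
  have hδμ : δ = δ ^ (1 - μ) * δ ^ μ := by rw [← Real.rpow_add hδ, sub_add_cancel, Real.rpow_one]
  rw [Real.mul_rpow (by positivity) ht, Real.mul_rpow hδ.le ht, ← Real.rpow_pow_comm hA,
    pow_succ']
  nth_rewrite 1 [hδμ]
  ring

section MaxMod

variable {m : ℕ}

theorem maxMod_eq_sSup_sphere (g : EuclideanSpace ℝ (Fin m) → EuclideanSpace ℝ (Fin m)) (r : ℝ) :
    maxMod g r = sSup ((‖g ·‖) '' Metric.sphere 0 r) := by
  unfold maxMod
  congr 2
  ext x
  simp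

theorem norm_le_maxMod {g : EuclideanSpace ℝ (Fin m) → EuclideanSpace ℝ (Fin m)}
    (hg : Continuous g) (x : EuclideanSpace ℝ (Fin m)) : ‖g x‖ ≤ maxMod g ‖x‖ := by
  rw [maxMod_eq_sSup_sphere]
  exact le_csSup ((isCompact_sphere 0 _).bddAbove_image hg.norm.continuousOn)
    ⟨x, mem_sphere_zero_iff_norm.2 rfl, rfl⟩

theorem exists_norm_eq_maxMod (hm : 0 < m)
    {g : EuclideanSpace ℝ (Fin m) → EuclideanSpace ℝ (Fin m)} (hg : Continuous g) {r : ℝ}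
    (hr : 0 ≤ r) : ∃ x : EuclideanSpace ℝ (Fin m), ‖x‖ = r ∧ ‖g x‖ = maxMod g r := by
  have : NeZero m := ⟨hm.ne'⟩
  obtain ⟨x, hx, hmax⟩ := (isCompact_sphere (0 : EuclideanSpace ℝ (Fin m)) r).exists_sSup_image_eq
    (NormedSpace.sphere_nonempty.2 hr) hg.norm.continuousOn
  exact ⟨x, mem_sphere_zero_iff_norm.1 hx, by rw [maxMod_eq_sSup_sphere, hmax]⟩

theorem lt_iterMaxMod {g : EuclideanSpace ℝ (Fin m) → EuclideanSpace ℝ (Fin m)} {R₂ R : ℝ}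
    (hesc : ∀ r, R₂ ≤ r → R₂ < maxMod g r) (hR : R₂ < R) (n : ℕ) : R₂ < iterMaxMod g R n := by
  induction n with
  | zero => exact hR
  | succ n ih => exact hesc _ ih.le

end MaxMod

section Linearizer

variable {m : ℕ} {f L : EuclideanSpace ℝ (Fin m) → EuclideanSpace ℝ (Fin m)} {R₀ C a : ℝ}

theorem const_mul_maxMod_rpow_le_maxMod_two_mul (hm : 0 < m) (hL : Continuous L)
    (hfunc : ∀ x, f (L x) = L ((2 : ℝ) • x))
    (hlow : ∀ y, R₀ < ‖y‖ → C * ‖y‖ ^ a ≤ ‖f y‖) {r : ℝ} (hr : 0 ≤ r)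
    (hMr : R₀ < maxMod L r) : C * maxMod L r ^ a ≤ maxMod L (2 * r) := by
  obtain ⟨x, rfl, hx⟩ := exists_norm_eq_maxMod hm hL hr
  rw [← hx] at hMr ⊢
  calc C * ‖L x‖ ^ a ≤ ‖f (L x)‖ := hlow _ hMr
    _ = ‖L ((2 : ℝ) • x)‖ := by rw [hfunc]
    _ ≤ maxMod L (2 * ‖x‖) := by simpa [norm_smul] using norm_le_maxMod hL ((2 : ℝ) • x)

theorem rpow_pow_le_maxMod_two_pow_mul (hm : 0 < m) (hL : Continuous L)
    (hfunc : ∀ x, f (L x) = L ((2 : ℝ) • x))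
    (hlow : ∀ y, R₀ < ‖y‖ → C * ‖y‖ ^ a ≤ ‖f y‖) (hC : 0 < C) (ha : 1 < a)
    (hR₀ : 1 < C ^ (1 / (a - 1)) * R₀) {r : ℝ} (hr : 0 ≤ r) (hMr : R₀ < maxMod L r) (k : ℕ) :
    (C ^ (1 / (a - 1)) * maxMod L r) ^ (a ^ k) ≤ C ^ (1 / (a - 1)) * maxMod L (2 ^ k * r) := by
  have hR₀pos : 0 < R₀ := pos_of_mul_pos_right (zero_lt_one.trans hR₀) (by positivity)
  have hstep (k : ℕ) (hk : R₀ < maxMod L (2 ^ k * r)) :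
      (C ^ (1 / (a - 1)) * maxMod L (2 ^ k * r)) ^ a ≤
        C ^ (1 / (a - 1)) * maxMod L (2 ^ (k + 1) * r) := by
    rw [← rpow_inv_sub_one_mul_const_mul_rpow hC ha.ne' (by linarith), pow_succ', mul_assoc]
    gcongr
    exact const_mul_maxMod_rpow_le_maxMod_two_mul hm hL hfunc hlow (by positivity) hk
  simpa using rpow_pow_le_of_rpow_le_succ (u := fun k => maxMod L (2 ^ k * r)) (by positivity)
    ha.le hR₀ (by simpa using hMr) hstep k

theorem exists_lt_maxMod_self (hm : 0 < m) (hL : Continuous L)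
    (hfunc : ∀ x, f (L x) = L ((2 : ℝ) • x))
    (hlow : ∀ y, R₀ < ‖y‖ → C * ‖y‖ ^ a ≤ ‖f y‖) (hC : 0 < C) (ha : 1 < a)
    (hR₀ : 1 < C ^ (1 / (a - 1)) * R₀) {r₁ : ℝ} (hr₁ : 0 < r₁) (hMr₁ : R₀ < maxMod L r₁) :
    ∃ R₂, R₀ ≤ R₂ ∧ R₂ < maxMod L R₂ := by
  set δ := C ^ (1 / (a - 1))
  have hδ : 0 < δ := by positivity
  obtain ⟨k, hk, hk'⟩ := ((tendsto_pow_atTop_atTop_of_one_lt one_lt_two).atTop_mul_const hr₁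
    |>.eventually_ge_atTop R₀ |>.and
    (eventually_const_mul_pow_lt_rpow_pow hR₀ ha (mul_pos hδ hr₁) two_pos)).exists
  refine ⟨2 ^ k * r₁, hk, lt_of_mul_lt_mul_left ?_ hδ.le⟩
  calc δ * (2 ^ k * r₁) = δ * r₁ * 2 ^ k := by ring
    _ < (δ * R₀) ^ (a ^ k) := hk'
    _ ≤ (δ * maxMod L r₁) ^ (a ^ k) := by gcongr
    _ ≤ δ * maxMod L (2 ^ k * r₁) :=
      rpow_pow_le_maxMod_two_pow_mul hm hL hfunc hlow hC ha hR₀ hr₁.le hMr₁ k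

end Linearizer

theorem maxMod_beats_mu_power_general {m : ℕ} (hm : 2 ≤ m) (d K : ℝ) (hK : 1 ≤ K) (hdK : K < d)
    (a : ℝ) (ha : a = (d / K) ^ ((1 : ℝ) / ((m : ℝ) - 1)))
    (R0 C1 : ℝ) (hR0 : 1 ≤ R0) (hC1 : 0 < C1)
    (hbig : 1 < C1 * R0 ^ (a - 1))
    (f L : EuclideanSpace ℝ (Fin m) → EuclideanSpace ℝ (Fin m))
    (hlow : ∀ y : EuclideanSpace ℝ (Fin m), R0 < ‖y‖ → C1 * ‖y‖ ^ a ≤ ‖f y‖)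
    (hLcont : Continuous L)
    (hfunc : ∀ x : EuclideanSpace ℝ (Fin m), f (L x) = L ((2 : ℝ) • x))
    (hmono : ∀ r s : ℝ, 0 < r → r ≤ s → maxMod L r ≤ maxMod L s)
    (r1 : ℝ) (hr1 : 0 < r1) (hMr1 : R0 < maxMod L r1)
    (μ : ℝ) :
    ∃ R2 : ℝ, 0 < R2 ∧ ∃ N : ℕ, ∀ R : ℝ, R2 < R → ∀ n : ℕ, N ≤ n →
      ((2 : ℝ) ^ (n + 1) * iterMaxMod L R (n + 1)) ^ μ <
        maxMod L ((2 : ℝ) ^ n * iterMaxMod L R n) := by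
  have hm0 : 0 < m := by omega
  have ha1 : 1 < a := by
    have hm1 : (1 : ℝ) < m := by exact_mod_cast hm
    rw [ha]
    exact Real.one_lt_rpow (by rwa [one_lt_div (by linarith)]) (by simp [hm1])
  set δ := C1 ^ (1 / (a - 1))
  have hδ : 0 < δ := by positivity
  have hδR0 : 1 < δ * R0 := one_lt_rpow_inv_sub_one_mul hC1 ha1 (by linarith) hbig
  obtain ⟨R2, hR0R2, hR2⟩ :=
    exists_lt_maxMod_self hm0 hLcont hfunc hlow hC1 ha1 hδR0 hr1 hMr1
  have hesc : ∀ r, R2 ≤ r → R2 < maxMod L r :=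
    fun r hr => hR2.trans_le (hmono _ _ (by linarith) hr)
  obtain ⟨N, hN⟩ := (eventually_const_mul_pow_mul_rpow_lt hδR0 ha1 (c := δ ^ (1 - μ) * 2 ^ μ)
    (by positivity) (Real.rpow_pos_of_pos two_pos μ) μ).exists_forall_of_atTop
  refine ⟨R2, by linarith, N, fun R hR n hn => ?_⟩
  set s := iterMaxMod L R n
  have hs : R2 < s := lt_iterMaxMod hesc hR n
  have ht : R2 < maxMod L s := hesc s hs.le
  refine lt_of_mul_lt_mul_left ?_ hδ.le
  calc δ * ((2 : ℝ) ^ (n + 1) * maxMod L s) ^ μ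
      = δ ^ (1 - μ) * 2 ^ μ * (2 ^ μ) ^ n * (δ * maxMod L s) ^ μ :=
        mul_rpow_pow_succ_mul hδ zero_le_two (by linarith) μ n
    _ < (δ * maxMod L s) ^ (a ^ n) := hN n hn _ (by gcongr; linarith)
    _ ≤ δ * maxMod L (2 ^ n * s) :=
      rpow_pow_le_maxMod_two_pow_mul hm0 hLcont hfunc hlow hC1 ha1 hδR0 (by linarith)
        (by linarith) n

/-- Lemma 7.2 of the paper: for the sequence `r_n = 2^n M^n(R,L)` one has
`M(r_n, L) > r_{n+1}^μ` for all large `R` and `n`. -/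
theorem maxMod_beats_mu_power {m : ℕ} (hm : 2 ≤ m) (d K : ℝ) (hK : 1 ≤ K) (hdK : K < d)
    (a b : ℝ) (ha : a = (d / K) ^ ((1 : ℝ) / ((m : ℝ) - 1)))
    (hb : b = (d * K) ^ ((1 : ℝ) / ((m : ℝ) - 1)))
    (R0 C1 C2 : ℝ) (hR0 : 1 ≤ R0) (hC1 : 0 < C1) (hC2 : 1 ≤ C2)
    (hbig : 1 < C1 * R0 ^ (a - 1))
    (f L : EuclideanSpace ℝ (Fin m) → EuclideanSpace ℝ (Fin m))
    (hlow : ∀ y : EuclideanSpace ℝ (Fin m), R0 < ‖y‖ → C1 * ‖y‖ ^ a ≤ ‖f y‖)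
    (hup : ∀ y : EuclideanSpace ℝ (Fin m), ‖f y‖ ≤ C2 * (max ‖y‖ R0) ^ b)
    (hLcont : Continuous L)
    (hfunc : ∀ x : EuclideanSpace ℝ (Fin m), f (L x) = L ((2 : ℝ) • x))
    (hmono : ∀ r s : ℝ, 0 < r → r ≤ s → maxMod L r ≤ maxMod L s)
    (r1 : ℝ) (hr1 : 0 < r1) (hMr1 : R0 < maxMod L r1)
    (μ : ℝ) (hμ : 1 < μ) :
    ∃ R2 : ℝ, 0 < R2 ∧ ∃ N : ℕ, ∀ R : ℝ, R2 < R → ∀ n : ℕ, N ≤ n →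
      ((2 : ℝ) ^ (n + 1) * iterMaxMod L R (n + 1)) ^ μ <
        maxMod L ((2 : ℝ) ^ n * iterMaxMod L R n) :=
  maxMod_beats_mu_power_general hm d K hK hdK a ha R0 C1 hR0 hC1 hbig f L hlow hLcont hfunc hmono r1
    hr1 hMr1 μ
end
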